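/- Let n ≥ 3, let C be the n×n real circulant matrix with entries C_{i,i+1 mod n} = C_{i,i−1 mod n} = 1/2 and all other entries 0, let I be the n×n identity, and let k_φ, k_ω > 0. Define the 2n×2n real block matrix à = [[0, k_ω I], [C − I, k_φ(C − I)]]. Then for every w = (w₁, w₂) ∈ ℝⁿ × ℝⁿ with Σᵢ (w₁)ᵢ = 0 and Σᵢ (w₂)ᵢ = 0, one has exp(t·Ã)·w → 0 as t → ∞. -/

import Mathlib

open Matrix

/-- The `n × n` circulant matrix with first row `(0, 1/2, 0, …, 0, 1/2)`. -/
noncomputable def ringC (n : ℕ) : Matrix (Fin n) (Fin n) ℝ :=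
  Matrix.of fun i j =>
    if ((i : ℕ) + 1) % n = (j : ℕ) ∨ ((j : ℕ) + 1) % n = (i : ℕ) then (1 : ℝ) / 2 else 0

open Filter Topology

/-!
Write `exp (t • Ã) *ᵥ w = (u t, v t)`, so that `u' = k_ω v` and `v' = M u + k_φ M v` with
`M = C - 1`. Since `M` has zero column sums, `∑ u` and `∑ v` are conserved, hence stay `0`.
On zero-sum vectors `-M` is coercive: `-(x ⬝ᵥ M x) = ½ ∑ (x (i+1) - x i)²` and a discrete
Poincaré inequality on the cycle bounds `∑ x i²` by `n⁴` times that sum. For suitable `a, b` the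
energy `E = b |v|² + u ⬝ᵥ v - a (u ⬝ᵥ M u)` is then comparable to `|u|² + |v|²` and satisfies
`E' ≤ -E / K`, so it decays exponentially.
-/

variable {ι : Type*} [Fintype ι]

theorem HasDerivAt.dotProduct {u v : ℝ → ι → ℝ} {u' v' : ι → ℝ} {t : ℝ}
    (hu : HasDerivAt u u' t) (hv : HasDerivAt v v' t) :
    HasDerivAt (fun s => u s ⬝ᵥ v s) (u' ⬝ᵥ v t + u t ⬝ᵥ v') t := by
  have := HasDerivAt.fun_sum (u := Finset.univ) fun i _ =>
    (hasDerivAt_pi.1 hu i).fun_mul (hasDerivAt_pi.1 hv i)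
  rw [Finset.sum_add_distrib] at this
  exact this

theorem HasDerivAt.const_mulVec (A : Matrix ι ι ℝ) {v : ℝ → ι → ℝ} {v' : ι → ℝ} {t : ℝ}
    (hv : HasDerivAt v v' t) :
    HasDerivAt (fun s => A *ᵥ v s) (A *ᵥ v') t :=
  (Matrix.mulVecLin A).toContinuousLinearMap.hasFDerivAt.comp_hasDerivAt t hv

theorem Matrix.IsSymm.dotProduct_mulVec_comm {A : Matrix ι ι ℝ} (hA : A.IsSymm) (u v : ι → ℝ) :
    u ⬝ᵥ A *ᵥ v = v ⬝ᵥ A *ᵥ u := by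
  rw [dotProduct_mulVec, ← mulVec_transpose, hA.eq, dotProduct_comm]

theorem dotProduct_self_nonneg (v : ι → ℝ) : 0 ≤ v ⬝ᵥ v := by
  simpa using dotProduct_star_self_nonneg v

theorem sum_eq_of_hasDerivAt {u u' : ℝ → ι → ℝ} (hu : ∀ t, HasDerivAt u (u' t) t)
    (hu' : ∀ t, ∑ i, u' t i = 0) (t : ℝ) : ∑ i, u t i = ∑ i, u 0 i := by
  have h : ∀ s, HasDerivAt (fun s => u s ⬝ᵥ 1) 0 s := fun s => by
    simpa [dotProduct_one, hu' s] using (hu s).dotProduct (hasDerivAt_const s 1)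
  simpa only [dotProduct_one] using
    is_const_of_deriv_eq_zero (fun s => (h s).differentiableAt) (fun s => (h s).deriv) t 0

theorem le_mul_exp_neg_of_hasDerivAt {V V' : ℝ → ℝ} {ε : ℝ} (hV : ∀ t, HasDerivAt V (V' t) t)
    (hle : ∀ t, V' t ≤ -ε * V t) {t : ℝ} (ht : 0 ≤ t) : V t ≤ V 0 * Real.exp (-(ε * t)) := by
  have hG : ∀ s, HasDerivAt (fun s => V s * Real.exp (ε * s))
      ((V' s + ε * V s) * Real.exp (ε * s)) s := fun s =>
    ((hV s).fun_mul ((hasDerivAt_id' s).const_mul ε).exp).congr_deriv (by ring)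
  have hanti := antitone_of_hasDerivAt_nonpos hG fun s =>
    mul_nonpos_of_nonpos_of_nonneg (by linarith [hle s]) (Real.exp_pos _).le
  have := hanti ht
  simp only [mul_zero, Real.exp_zero, mul_one] at this
  rw [Real.exp_neg, ← div_eq_mul_inv, le_div_iff₀ (Real.exp_pos _)]
  exact this

theorem tendsto_zero_of_dotProduct_self_le {α : Type*} {l : Filter α} {x : α → ι → ℝ}
    {g : α → ℝ} (hg : Tendsto g l (𝓝 0)) (hx : ∀ᶠ a in l, x a ⬝ᵥ x a ≤ g a) :
    Tendsto x l (𝓝 0) := by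
  rw [tendsto_pi_nhds]
  intro j
  have hsqrt : Tendsto (fun a => Real.sqrt (g a)) l (𝓝 0) := by
    simpa [Function.comp_def] using (Real.continuous_sqrt.tendsto 0).comp hg
  refine squeeze_zero_norm' ?_ hsqrt
  filter_upwards [hx] with a ha
  rw [Real.norm_eq_abs, ← Real.sqrt_sq_eq_abs]
  refine Real.sqrt_le_sqrt (le_trans ?_ ha)
  simpa [dotProduct, sq] using
    Finset.single_le_sum (fun i _ => mul_self_nonneg (x a i)) (Finset.mem_univ j)

theorem sum_sq_le_sum_sq_sub {u : ι → ℝ} (hu : ∑ i, u i = 0) (a : ℝ) :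
    ∑ i, u i ^ 2 ≤ ∑ i, (u i - a) ^ 2 := by
  have : ∑ i, (u i - a) ^ 2 = ∑ i, u i ^ 2 + Fintype.card ι * a ^ 2 := by
    simp only [sub_sq, Finset.sum_add_distrib, Finset.sum_sub_distrib, ← Finset.sum_mul,
      ← Finset.mul_sum, hu]
    simp
  rw [this]
  have : 0 ≤ (Fintype.card ι : ℝ) * a ^ 2 := by positivity
  linarith

theorem hasDerivAt_exp_smul_mulVec [DecidableEq ι] (A : Matrix ι ι ℝ) (w : ι → ℝ) (t : ℝ) :
    HasDerivAt (fun s : ℝ => NormedSpace.exp (s • A) *ᵥ w)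
      (A *ᵥ (NormedSpace.exp (t • A) *ᵥ w)) t := by
  -- `exp` does not depend on the norm; any normed-algebra structure serves for the calculus
  let _ := Matrix.linftyOpNormedRing (n := ι) (α := ℝ)
  let _ := Matrix.linftyOpNormedAlgebra (n := ι) (R := ℝ) (α := ℝ)
  rw [mulVec_mulVec]
  exact ((Matrix.mulVecBilin ℝ ℝ).flip w).toContinuousLinearMap.hasFDerivAt.comp_hasDerivAt t
    (hasDerivAt_exp_smul_const' A t)

section SecondOrderConsensus

variable {M : Matrix ι ι ℝ} {kφ kω : ℝ} {u v : ℝ → ι → ℝ}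

def consensusEnergy (M : Matrix ι ι ℝ) (a b : ℝ) (x y : ι → ℝ) : ℝ :=
  b * (y ⬝ᵥ y) + x ⬝ᵥ y - a * (x ⬝ᵥ M *ᵥ x)

theorem hasDerivAt_consensusEnergy (hM : M.IsSymm) (a b : ℝ) {t : ℝ}
    (hu : HasDerivAt u (kω • v t) t) (hv : HasDerivAt v (M *ᵥ u t + kφ • M *ᵥ v t) t) :
    HasDerivAt (fun s => consensusEnergy M a b (u s) (v s))
      (kω * (v t ⬝ᵥ v t) + u t ⬝ᵥ M *ᵥ u t + 2 * b * kφ * (v t ⬝ᵥ M *ᵥ v t)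
        + (kφ + 2 * b - 2 * a * kω) * (u t ⬝ᵥ M *ᵥ v t)) t := by
  refine ((((hv.dotProduct hv).const_mul b).add (hu.dotProduct hv)).sub
    ((hu.dotProduct (hu.const_mulVec M)).const_mul a)).congr_deriv ?_
  simp only [dotProduct_add, add_dotProduct, smul_dotProduct, dotProduct_smul, mulVec_smul,
    smul_eq_mul]
  rw [dotProduct_comm (M *ᵥ u t), dotProduct_comm (M *ᵥ v t), hM.dotProduct_mulVec_comm (v t) (u t)]
  ring

theorem sum_eq_zero_of_consensus (hsum : ∀ x, ∑ i, (M *ᵥ x) i = 0)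
    (hu : ∀ t, HasDerivAt u (kω • v t) t) (hv : ∀ t, HasDerivAt v (M *ᵥ u t + kφ • M *ᵥ v t) t)
    (hu0 : ∑ i, u 0 i = 0) (hv0 : ∑ i, v 0 i = 0) (t : ℝ) :
    ∑ i, u t i = 0 ∧ ∑ i, v t i = 0 := by
  have hvt : ∀ t, ∑ i, v t i = 0 := fun t => by
    rw [sum_eq_of_hasDerivAt hv
      (fun s => by simp [Finset.sum_add_distrib, ← Finset.mul_sum, hsum]) t, hv0]
  refine ⟨?_, hvt t⟩
  rw [sum_eq_of_hasDerivAt hu (fun s => by simp [← Finset.mul_sum, hvt s]) t, hu0]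

theorem half_add_le_consensusEnergy {c a b : ℝ} {x : ι → ℝ} (y : ι → ℝ)
    (hx : c * (x ⬝ᵥ x) ≤ -(x ⬝ᵥ M *ᵥ x)) (ha : 0 ≤ a) (hac : 1 ≤ a * c) (hb : 1 ≤ b) :
    (x ⬝ᵥ x + y ⬝ᵥ y) / 2 ≤ consensusEnergy M a b x y := by
  have hxy := dotProduct_self_nonneg (x + y)
  simp only [dotProduct_add, add_dotProduct, dotProduct_comm y x] at hxy
  have := mul_le_mul_of_nonneg_left hx ha
  unfold consensusEnergy
  nlinarith [mul_nonneg (sub_nonneg.2 hac) (dotProduct_self_nonneg x),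
    mul_nonneg (sub_nonneg.2 hb) (dotProduct_self_nonneg y)]

theorem consensusEnergy_le {c a b : ℝ} {x : ι → ℝ} (y : ι → ℝ)
    (hx : c * (x ⬝ᵥ x) ≤ -(x ⬝ᵥ M *ᵥ x)) (hc : 0 < c) (ha : 0 ≤ a) (hb : 0 ≤ b) :
    consensusEnergy M a b x y ≤ (a + b + 1 / (2 * c) + 1 / 2) * (y ⬝ᵥ y - x ⬝ᵥ M *ᵥ x) := by
  have hxy := dotProduct_self_nonneg (x - y)
  simp only [dotProduct_sub, sub_dotProduct, dotProduct_comm y x] at hxy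
  have hxx : x ⬝ᵥ x ≤ 2 * (1 / (2 * c)) * -(x ⬝ᵥ M *ᵥ x) := by
    rw [show 2 * (1 / (2 * c)) = c⁻¹ by field_simp, ← div_eq_inv_mul, le_div_iff₀' hc]
    exact hx
  have hP : 0 ≤ -(x ⬝ᵥ M *ᵥ x) := le_trans (by positivity [dotProduct_self_nonneg x]) hx
  have hyy := dotProduct_self_nonneg y
  unfold consensusEnergy
  nlinarith [mul_nonneg ha hyy, mul_nonneg hb hP, mul_nonneg (by positivity : 0 ≤ 1 / (2 * c)) hyy]

theorem tendsto_consensus {c : ℝ}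
    (hM : M.IsSymm) (hsum : ∀ x, ∑ i, (M *ᵥ x) i = 0) (hc : 0 < c)
    (hcoer : ∀ x : ι → ℝ, ∑ i, x i = 0 → c * (x ⬝ᵥ x) ≤ -(x ⬝ᵥ M *ᵥ x))
    (hkφ : 0 < kφ) (hkω : 0 < kω)
    (hu : ∀ t, HasDerivAt u (kω • v t) t) (hv : ∀ t, HasDerivAt v (M *ᵥ u t + kφ • M *ᵥ v t) t)
    (hu0 : ∑ i, u 0 i = 0) (hv0 : ∑ i, v 0 i = 0) :
    Tendsto (fun t => u t ⬝ᵥ u t + v t ⬝ᵥ v t) atTop (𝓝 0) := by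
  have hsums := sum_eq_zero_of_consensus hsum hu hv hu0 hv0
  -- `b` makes the energy coercive and dissipative, `a` cancels the cross term `u ⬝ᵥ M *ᵥ v`
  set b := 1 + kω / c + (kω + 1) / (2 * kφ * c)
  set a := (kφ + 2 * b) / (2 * kω)
  set K := a + b + 1 / (2 * c) + 1 / 2
  have hbc : b * c = c + kω + (kω + 1) / (2 * kφ) := by simp only [b]; field_simp
  have hb : 1 ≤ b := by
    have : 0 ≤ kω / c + (kω + 1) / (2 * kφ * c) := by positivity
    linarith
  have hbφ : kω + 1 ≤ 2 * b * kφ * c := by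
    have : 2 * b * kφ * c = 2 * kφ * c + 2 * kφ * kω + (kω + 1) := by
      rw [show 2 * b * kφ * c = 2 * kφ * (b * c) by ring, hbc]; field_simp
    nlinarith [mul_pos hkφ hc, mul_pos hkφ hkω]
  have ha : 0 ≤ a := by positivity
  have hac : 1 ≤ a * c := by
    rw [div_mul_eq_mul_div, le_div_iff₀ (by positivity), add_mul, mul_assoc, hbc]
    have : 0 ≤ (kω + 1) / (2 * kφ) := by positivity
    nlinarith [mul_pos hkφ hc]
  have hK : 0 < K := by positivity
  set E := fun t => consensusEnergy M a b (u t) (v t)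
  have hdecay : ∀ t, 0 ≤ t → E t ≤ E 0 * Real.exp (-(K⁻¹ * t)) := by
    refine fun t => le_mul_exp_neg_of_hasDerivAt
      (fun s => hasDerivAt_consensusEnergy hM a b (hu s) (hv s)) (fun s => ?_)
    have hcu := hcoer _ (hsums s).1
    have hcv := mul_le_mul_of_nonneg_left (hcoer _ (hsums s).2) (by positivity : 0 ≤ 2 * b * kφ)
    have hE : K⁻¹ * E s ≤ v s ⬝ᵥ v s - u s ⬝ᵥ M *ᵥ u s := by
      rw [inv_mul_le_iff₀ hK]; exact consensusEnergy_le (v s) hcu hc ha (by linarith)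
    have hcancel : kφ + 2 * b - 2 * a * kω = 0 := by simp only [a]; field_simp; ring
    rw [hcancel, zero_mul, add_zero]
    nlinarith [mul_nonneg (sub_nonneg.2 hbφ) (dotProduct_self_nonneg (v s))]
  have hg : Tendsto (fun t => 2 * E 0 * Real.exp (-(K⁻¹ * t))) atTop (𝓝 0) := by
    simpa using (Real.tendsto_exp_neg_atTop_nhds_zero.comp
      (tendsto_id.const_mul_atTop (inv_pos.2 hK))).const_mul (2 * E 0)
  refine tendsto_of_tendsto_of_tendsto_of_le_of_le' tendsto_const_nhds hg
    (.of_forall fun t => add_nonneg (dotProduct_self_nonneg _) (dotProduct_self_nonneg _)) ?_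
  filter_upwards [eventually_ge_atTop 0] with t ht
  have := half_add_le_consensusEnergy (v t) (hcoer _ (hsums t).1) ha hac hb
  linarith [hdecay t ht]

end SecondOrderConsensus

theorem tendsto_exp_smul_fromBlocks_mulVec [DecidableEq ι] {M : Matrix ι ι ℝ} {kφ kω c : ℝ}
    (hM : M.IsSymm) (hsum : ∀ x, ∑ i, (M *ᵥ x) i = 0) (hc : 0 < c)
    (hcoer : ∀ x : ι → ℝ, ∑ i, x i = 0 → c * (x ⬝ᵥ x) ≤ -(x ⬝ᵥ M *ᵥ x))
    (hkφ : 0 < kφ) (hkω : 0 < kω) (w : ι ⊕ ι → ℝ)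
    (h1 : ∑ i, w (Sum.inl i) = 0) (h2 : ∑ i, w (Sum.inr i) = 0) :
    Tendsto (fun t : ℝ =>
      NormedSpace.exp (t • fromBlocks 0 (kω • (1 : Matrix ι ι ℝ)) M (kφ • M)) *ᵥ w)
      atTop (𝓝 0) := by
  set A := fromBlocks 0 (kω • (1 : Matrix ι ι ℝ)) M (kφ • M)
  set x := fun t : ℝ => NormedSpace.exp (t • A) *ᵥ w
  have hx := hasDerivAt_exp_smul_mulVec A w
  have hu : ∀ t, HasDerivAt (fun s i => x s (Sum.inl i)) (kω • fun i => x t (Sum.inr i)) t :=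
    fun t => (hasDerivAt_pi.2 fun i => hasDerivAt_pi.1 (hx t) (Sum.inl i)).congr_deriv <| by
      ext i; simp [A, x, fromBlocks_mulVec, -mulVec_mulVec, Function.comp_def, smul_mulVec]
  have hv : ∀ t, HasDerivAt (fun s i => x s (Sum.inr i))
      (M *ᵥ (fun i => x t (Sum.inl i)) + kφ • M *ᵥ fun i => x t (Sum.inr i)) t :=
    fun t => (hasDerivAt_pi.2 fun i => hasDerivAt_pi.1 (hx t) (Sum.inr i)).congr_deriv <| by
      ext i; simp [A, x, fromBlocks_mulVec, -mulVec_mulVec, Function.comp_def, smul_mulVec]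
  have hx0 : x 0 = w := by simp [x, NormedSpace.exp_zero]
  refine tendsto_zero_of_dotProduct_self_le
    (tendsto_consensus hM hsum hc hcoer hkφ hkω hu hv (by simpa [hx0]) (by simpa [hx0]))
    (Eventually.of_forall fun t => ?_)
  simp [dotProduct, Fintype.sum_sum_type]

theorem ringC_isSymm (n : ℕ) : (ringC n).IsSymm :=
  Matrix.IsSymm.ext fun i j => by simp only [ringC, of_apply, or_comm]

section Cycle

variable {n : ℕ} [NeZero n]

theorem Fin.val_add_one_of_two_le (hn : 2 ≤ n) (i : Fin n) :
    ((i + 1 : Fin n) : ℕ) = (i + 1) % n := by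
  rw [Fin.val_add, Fin.val_one', Nat.one_mod_eq_one.2 (by omega)]

theorem ringC_apply (hn : 2 ≤ n) (i j : Fin n) :
    ringC n i j = if j = i + 1 ∨ j = i - 1 then 1 / 2 else 0 := by
  simp only [ringC, of_apply, ← Fin.val_add_one_of_two_le hn, Fin.val_inj, eq_sub_iff_add_eq,
    eq_comm]

theorem ringC_mulVec_apply (hn : 3 ≤ n) (v : Fin n → ℝ) (i : Fin n) :
    (ringC n *ᵥ v) i = (v (i + 1) + v (i - 1)) / 2 := by
  have hne : i + 1 ≠ i - 1 := by
    intro h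
    rw [eq_sub_iff_add_eq, add_assoc, add_eq_left] at h
    have := congrArg Fin.val h
    rw [Fin.val_add_one_of_two_le (by omega), Fin.val_one', Nat.one_mod_eq_one.2 (by omega),
      Nat.mod_eq_of_lt (by omega)] at this
    simp at this
  rw [mulVec, dotProduct, Fintype.sum_eq_add (i + 1) (i - 1) hne]
  · simp [ringC_apply (by omega : 2 ≤ n), hne, hne.symm]; ring
  · rintro j ⟨h1, h2⟩
    simp [ringC_apply (by omega : 2 ≤ n), h1, h2]

theorem sum_ringC_mulVec (hn : 3 ≤ n) (v : Fin n → ℝ) : ∑ i, (ringC n *ᵥ v) i = ∑ i, v i := by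
  have hadd : ∑ i, v (i + 1) = ∑ i, v i := Equiv.sum_comp (Equiv.addRight 1) v
  have hsub : ∑ i, v (i - 1) = ∑ i, v i := Equiv.sum_comp (Equiv.subRight 1) v
  simp only [ringC_mulVec_apply hn, ← Finset.sum_div, Finset.sum_add_distrib, hadd, hsub]
  ring

theorem dotProduct_sub_ringC_mulVec_self (hn : 3 ≤ n) (u : Fin n → ℝ) :
    u ⬝ᵥ (u - ringC n *ᵥ u) = (∑ i, (u (i + 1) - u i) ^ 2) / 2 := by
  have hshift : ∑ i, u i * u (i - 1) = ∑ i, u i * u (i + 1) :=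
    Fintype.sum_equiv (Equiv.subRight 1) _ _ fun i => by simp [mul_comm]
  have hsq : ∑ i, u (i + 1) ^ 2 = ∑ i, u i ^ 2 := Equiv.sum_comp (Equiv.addRight 1) (u · ^ 2)
  calc u ⬝ᵥ (u - ringC n *ᵥ u)
      = ∑ i, (u i ^ 2 - u i * u (i + 1) / 2 - u i * u (i - 1) / 2) :=
        Finset.sum_congr rfl fun i _ => by simp only [Pi.sub_apply, ringC_mulVec_apply hn]; ring
    _ = ∑ i, (u (i + 1) ^ 2 / 2 - u i * u (i + 1) + u i ^ 2 / 2) := by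
        simp only [Finset.sum_sub_distrib, Finset.sum_add_distrib, ← Finset.sum_div, hshift, hsq]
        ring
    _ = (∑ i, (u (i + 1) - u i) ^ 2) / 2 := by
        rw [Finset.sum_div]; exact Finset.sum_congr rfl fun i _ => by ring

theorem abs_sub_apply_zero_le (u : Fin n → ℝ) (i : Fin n) :
    |u i - u 0| ≤ i * ∑ j, |u (j + 1) - u j| := by
  obtain ⟨i, hi⟩ := i
  induction i with
  | zero => simp
  | succ k ih =>
    have hk : k < n := by omega
    have hsucc : (⟨k + 1, hi⟩ : Fin n) = ⟨k, hk⟩ + 1 :=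
      Fin.ext (Fin.val_add_one_of_lt' (i := ⟨k, hk⟩) hi).symm
    have hle := Finset.single_le_sum (f := fun j => |u (j + 1) - u j|)
      (fun j _ => abs_nonneg _) (Finset.mem_univ ⟨k, hk⟩)
    calc |u ⟨k + 1, hi⟩ - u 0| ≤ |u (⟨k, hk⟩ + 1) - u ⟨k, hk⟩| + |u ⟨k, hk⟩ - u 0| := by
          rw [hsucc]; exact abs_sub_le _ _ _
      _ ≤ ((k + 1 : ℕ) : ℝ) * ∑ j, |u (j + 1) - u j| := by push_cast; linarith [ih hk]

theorem sum_sq_le_mul_sum_sq_sub_of_sum_eq_zero {u : Fin n → ℝ} (hu : ∑ i, u i = 0) :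
    ∑ i, u i ^ 2 ≤ n ^ 4 * ∑ i, (u (i + 1) - u i) ^ 2 := by
  set D := ∑ j, |u (j + 1) - u j|
  have hD : D ^ 2 ≤ n * ∑ i, (u (i + 1) - u i) ^ 2 := by
    simpa [sq_abs] using
      sq_sum_le_card_mul_sum_sq (s := Finset.univ) (f := fun j => |u (j + 1) - u j|)
  have hdev : ∀ i, (u i - u 0) ^ 2 ≤ (n * D) ^ 2 := fun i => by
    rw [← sq_abs]
    refine pow_le_pow_left₀ (abs_nonneg _) ((abs_sub_apply_zero_le u i).trans ?_) 2
    exact mul_le_mul_of_nonneg_right (by exact_mod_cast i.isLt.le) (by positivity)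
  calc ∑ i, u i ^ 2 ≤ ∑ i, (u i - u 0) ^ 2 := sum_sq_le_sum_sq_sub hu _
    _ ≤ ∑ _i : Fin n, (n * D) ^ 2 := Finset.sum_le_sum fun i _ => hdev i
    _ = n ^ 3 * D ^ 2 := by simp; ring
    _ ≤ n ^ 3 * (n * ∑ i, (u (i + 1) - u i) ^ 2) := by gcongr
    _ = n ^ 4 * ∑ i, (u (i + 1) - u i) ^ 2 := by ring

theorem le_neg_dotProduct_ringC_sub_one_mulVec (hn : 3 ≤ n) {u : Fin n → ℝ}
    (hu : ∑ i, u i = 0) : 1 / (2 * n ^ 4) * (u ⬝ᵥ u) ≤ -(u ⬝ᵥ (ringC n - 1) *ᵥ u) := by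
  have := sum_sq_le_mul_sum_sq_sub_of_sum_eq_zero hu
  rw [sub_mulVec, one_mulVec, ← neg_sub, dotProduct_neg, neg_neg,
    dotProduct_sub_ringC_mulVec_self hn, div_mul_eq_mul_div, div_le_iff₀ (by positivity)]
  simp only [dotProduct, ← sq]
  linarith

end Cycle

/-- Convergence core of Proposition 3 (Controller 3): for any `w = (w₁, w₂)` with
`∑ᵢ (w₁)ᵢ = 0` and `∑ᵢ (w₂)ᵢ = 0`, the flow `exp(t Ã) w` of the error-dynamics matrix
`Ã = [[0, k_ω I], [C - I, k_φ (C - I)]]` tends to `0` as `t → ∞`. -/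
theorem stmt_11 (n : ℕ) (hn : 3 ≤ n) (kφ kω : ℝ) (hkφ : 0 < kφ) (hkω : 0 < kω)
    (w : Fin n ⊕ Fin n → ℝ)
    (h1 : ∑ i, w (Sum.inl i) = 0) (h2 : ∑ i, w (Sum.inr i) = 0) :
    Filter.Tendsto
      (fun t : ℝ => NormedSpace.exp
        (t • Matrix.fromBlocks 0 (kω • (1 : Matrix (Fin n) (Fin n) ℝ))
          (ringC n - 1) (kφ • (ringC n - 1))) *ᵥ w)
      Filter.atTop (nhds 0) := by
  have : NeZero n := ⟨by omega⟩
  refine tendsto_exp_smul_fromBlocks_mulVec ((ringC_isSymm n).sub isSymm_one) (fun v => ?_)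
    (by positivity) (fun u hu => le_neg_dotProduct_ringC_sub_one_mulVec hn hu) hkφ hkω w h1 h2
  simp [sub_mulVec, sum_ringC_mulVec hn]
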